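/- arXiv:1610.08387 — 4 statements merged into one kernel-verified Lean document; each statement's English description precedes it below -/
import Mathlib

section
/- Let F ⊣ G be an adjunction between idempotent complete categories realizing a monad A = GF. If the counit of the Eilenberg–Moore adjunction F_A ⊣ U_A is a split epimorphism at every algebra of the form E(d), the natural comparison functor K : Kleisli(A) → D from the Kleisli category is essentially surjective up to retracts: every object of D is a retract of an object in the essential image of K, provided G is conservative. -/
/-!
A section of the Eilenberg–Moore counit at `E(d) = (G d, G ε_d)` is an algebra map
`s : G d ⟶ G F G d` with `s ≫ G ε_d = 𝟙`. Its transpose `e : F G d ⟶ F G d` is idempotent and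
`G e = G ε_d ≫ s`. Splitting `e` in `D` through `Y`, the map `Y ⟶ F G d ⟶ d` becomes an
isomorphism after applying `G`, hence is one, so `d` is a retract of `F G d = K (G d)`.
-/

open CategoryTheory

variable {C D : Type*} [Category C] [Category D]

/-- The Kleisli comparison functor `K : Kleisli(GF) ⥤ D` of an adjunction `F ⊣ G`,
sending `x` to `F x`; it satisfies `K ∘ F_A = F` and `G ∘ K = U_A`. -/
def kleisliComparison {F : C ⥤ D} {G : D ⥤ C} (adj : F ⊣ G) :
    Kleisli adj.toMonad ⥤ D where
  obj X := F.obj X.of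
  map {X Y} f := F.map f.of ≫ adj.counit.app (F.obj Y.of)
  map_id X := by
    change F.map (adj.unit.app X.of) ≫ adj.counit.app (F.obj X.of) = _
    simp
  map_comp {X Y Z} f g := by
    change F.map (f.of ≫ G.map (F.map g.of) ≫ G.map (adj.counit.app _)) ≫ _ = _
    have h : ∀ {a b c : C} (u : a ⟶ G.obj (F.obj b)) (v : b ⟶ G.obj (F.obj c)),
        F.map (u ≫ G.map (F.map v) ≫ G.map (adj.counit.app (F.obj c))) ≫ adj.counit.app (F.obj c) =
          (F.map u ≫ adj.counit.app (F.obj b)) ≫ F.map v ≫ adj.counit.app (F.obj c) := by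
      intros
      simp
    exact h f.of g.of

namespace CategoryTheory

theorem isIso_comp_of_splittings {X Y₁ Y₂ : C} {i₁ : Y₁ ⟶ X} {r₁ : X ⟶ Y₁} {i₂ : Y₂ ⟶ X}
    {r₂ : X ⟶ Y₂} (h₁ : i₁ ≫ r₁ = 𝟙 Y₁) (h₂ : i₂ ≫ r₂ = 𝟙 Y₂) (h : r₁ ≫ i₁ = r₂ ≫ i₂) :
    IsIso (i₁ ≫ r₂) :=
  ⟨i₂ ≫ r₁, by simp [← reassoc_of% h, h₁], by simp [reassoc_of% h, h₂]⟩

theorem Functor.isSplitEpi_of_map_idempotent_eq [IsIdempotentComplete D] (G : D ⥤ C)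
    [G.ReflectsIsomorphisms] {X d : D} {e : X ⟶ X} (he : e ≫ e = e) (f : X ⟶ d)
    (s : G.obj d ⟶ G.obj X) (hs : s ≫ G.map f = 𝟙 _) (hGe : G.map e = G.map f ≫ s) :
    IsSplitEpi f := by
  obtain ⟨Y, ι, p, hιp, hpι⟩ := IsIdempotentComplete.idempotents_split X e he
  have : IsIso (G.map (ι ≫ f)) := by
    rw [G.map_comp]
    refine isIso_comp_of_splittings (r₁ := G.map p) ?_ hs ?_
    · rw [← G.map_comp, hιp, G.map_id]
    · rw [← G.map_comp, hpι, hGe]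
  have : IsIso (ι ≫ f) := isIso_of_reflects_iso _ G
  exact ⟨⟨CategoryTheory.inv (ι ≫ f) ≫ ι, by simp⟩⟩

theorem Monad.Algebra.exists_section_of_isSplitEpi_counit {T : Monad C} (A : T.Algebra)
    (h : IsSplitEpi (T.adj.counit.app A)) :
    ∃ s : A.A ⟶ T.obj A.A, s ≫ A.a = 𝟙 A.A ∧ T.map s ≫ T.μ.app A.A = A.a ≫ s := by
  obtain ⟨⟨σ, hσ⟩⟩ := h.exists_splitEpi
  refine ⟨σ.f, ?_, σ.h⟩
  have := congrArg Monad.Algebra.Hom.f hσ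
  rw [Monad.Algebra.comp_f, Monad.Algebra.id_f] at this
  simp only [Monad.adj_counit] at this
  exact this

theorem Adjunction.isSplitEpi_counit_app_of_isSplitEpi_comparison [IsIdempotentComplete D]
    {F : C ⥤ D} {G : D ⥤ C} (adj : F ⊣ G) [G.ReflectsIsomorphisms] (d : D)
    (h : IsSplitEpi (adj.toMonad.adj.counit.app ((Monad.comparison adj).obj d))) :
    IsSplitEpi (adj.counit.app d) := by
  obtain ⟨s, hs, hs_hom⟩ : ∃ s : G.obj d ⟶ G.obj (F.obj (G.obj d)),
      s ≫ G.map (adj.counit.app d) = 𝟙 _ ∧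
        G.map (F.map s) ≫ G.map (adj.counit.app _) = G.map (adj.counit.app d) ≫ s :=
    Monad.Algebra.exists_section_of_isSplitEpi_counit _ h
  have hGe : G.map ((adj.homEquiv _ _).symm s) = G.map (adj.counit.app d) ≫ s := by
    rw [adj.homEquiv_counit, G.map_comp, hs_hom]
  have he : (adj.homEquiv _ _).symm s ≫ (adj.homEquiv _ _).symm s =
      (adj.homEquiv _ _).symm s := by
    rw [← adj.homEquiv_naturality_right_symm, hGe, reassoc_of% hs]
  exact G.isSplitEpi_of_map_idempotent_eq he _ s hs hGe

end CategoryTheory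

theorem retract_of_kleisli_image_general
    [IsIdempotentComplete D]
    {F : C ⥤ D} {G : D ⥤ C} (adj : F ⊣ G) [G.ReflectsIsomorphisms]
    (h : ∀ d : D,
      IsSplitEpi (adj.toMonad.adj.counit.app ((Monad.comparison adj).obj d)))
    (d : D) :
    ∃ (x : Kleisli adj.toMonad) (i : d ⟶ (kleisliComparison adj).obj x)
      (r : (kleisliComparison adj).obj x ⟶ d), i ≫ r = 𝟙 d := by
  obtain ⟨⟨i, hi⟩⟩ := (adj.isSplitEpi_counit_app_of_isSplitEpi_comparison d (h d)).exists_splitEpi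
  exact ⟨Kleisli.mk adj.toMonad (G.obj d), i, adj.counit.app d, hi⟩

/-- If `C` and `D` are idempotent complete, `G` is conservative, and the Eilenberg–Moore
counit admits a section at every algebra of the form `E(d)`, then every object of `D` is a
retract of an object in the (essential) image of the Kleisli comparison functor. -/
theorem retract_of_kleisli_image
    [IsIdempotentComplete C] [IsIdempotentComplete D]
    {F : C ⥤ D} {G : D ⥤ C} (adj : F ⊣ G) [G.ReflectsIsomorphisms]
    (h : ∀ d : D,
      IsSplitEpi (adj.toMonad.adj.counit.app ((Monad.comparison adj).obj d)))
    (d : D) :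
    ∃ (x : Kleisli adj.toMonad) (i : d ⟶ (kleisliComparison adj).obj x)
      (r : (kleisliComparison adj).obj x ⟶ d), i ≫ r = 𝟙 d :=
  retract_of_kleisli_image_general adj h d
end

section
/- Let C be an idempotent complete triangulated category with a monad A whose Eilenberg–Moore adjunction F_A ⊣ U_A is a triangulated realization of A. Let F : C ⇄ D : G be any triangulated realization of the same monad A with D idempotent complete and G conservative. Then the Eilenberg–Moore comparison functor E : D → Alg(A) is an equivalence of categories, i.e. the adjunction F ⊣ G is monadic. -/
open CategoryTheory Limits Pretriangulated

/-!
In a triangulated category every epimorphism splits. The counit `F_A U_A M → M` of the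
Eilenberg–Moore adjunction has the structure map `A M → M` as underlying map, which is split by
the unit; so it is an epimorphism in `Alg(A)`, and every `A`-algebra is a retract of a free one.
The comparison functor `E` is bijective on maps out of the free objects `F c`, and since `D` is
idempotent complete, a retract of `E (F c)` lifts to a retract of `F c` in `D`. This gives
essential surjectivity; applied to the counit `F G X → X`, together with the conservativity of
`G`, it shows that every object of `D` is a retract of a free one, which makes `E` fully faithful.
-/

namespace CategoryTheory

variable {C D B : Type*} [Category C] [Category D] [Category B]

@[simps]
noncomputable def Retract.ofIsSplitEpi {X Y : C} (f : Y ⟶ X) [IsSplitEpi f] : Retract X Y :=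
  ⟨section_ f, f, IsSplitEpi.id f⟩

lemma Functor.map_bijective_of_retract (E : C ⥤ B) {X p Y : C} (h : Retract X p)
    (hp : Function.Bijective (E.map : (p ⟶ Y) → (E.obj p ⟶ E.obj Y))) :
    Function.Bijective (E.map : (X ⟶ Y) → (E.obj X ⟶ E.obj Y)) := by
  refine ⟨fun f g hfg => ?_, fun φ => ?_⟩
  · have hr : h.r ≫ f = h.r ≫ g := hp.1 (by simp only [Functor.map_comp, hfg])
    simpa using h.i ≫= hr
  · obtain ⟨g, hg⟩ := hp.2 (E.map h.r ≫ φ)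
    refine ⟨h.i ≫ g, ?_⟩
    rw [E.map_comp, hg, ← E.map_comp_assoc, h.retract, E.map_id, Category.id_comp]

lemma Functor.exists_retract_of_retract_obj (E : C ⥤ B) [IsIdempotentComplete C] {p : C}
    (hp : Function.Bijective (E.map : (p ⟶ p) → (E.obj p ⟶ E.obj p)))
    {M : B} (h : Retract M (E.obj p)) :
    ∃ (Y : C) (h' : Retract Y p) (e : E.obj Y ≅ M), e.hom = E.map h'.i ≫ h.r := by
  obtain ⟨q, hq⟩ := hp.2 (h.r ≫ h.i)
  have hqq : q ≫ q = q := hp.1 (by simp [hq])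
  obtain ⟨Y, i, r, hir, hri⟩ := IsIdempotentComplete.idempotents_split p q hqq
  refine ⟨Y, ⟨i, r, hir⟩, ⟨E.map i ≫ h.r, h.i ≫ E.map r, ?_, ?_⟩, rfl⟩
  · calc (E.map i ≫ h.r) ≫ h.i ≫ E.map r = E.map (i ≫ q ≫ r) := by simp [hq]
      _ = 𝟙 _ := by rw [← hri, Category.assoc, reassoc_of% hir, hir, E.map_id]
  · calc (h.i ≫ E.map r) ≫ E.map i ≫ h.r = h.i ≫ E.map q ≫ h.r := by simp [← hri]
      _ = 𝟙 _ := by simp [hq]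

lemma Monad.epi_adj_counit_app (T : Monad C) (M : T.Algebra) : Epi (T.adj.counit.app M) :=
  T.forget.epi_of_epi_map
    (IsSplitEpi.mk' ⟨T.η.app M.A, by rw [Monad.adj_counit]; exact M.unit⟩).epi

section

variable {F : C ⥤ D} {G : D ⥤ C} (adj : F ⊣ G)

/-- `hg` says that `g` is a morphism of `GF`-algebras from the free algebra on `c` to `G X`. -/
lemma Adjunction.map_homEquiv_symm_unit_comp {c : C} {X : D} (g : G.obj (F.obj c) ⟶ G.obj X)
    (hg : G.map (F.map g) ≫ G.map (adj.counit.app X) = G.map (adj.counit.app (F.obj c)) ≫ g) :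
    G.map ((adj.homEquiv c X).symm (adj.unit.app c ≫ g)) = g := by
  rw [Adjunction.homEquiv_counit, G.map_comp, F.map_comp, G.map_comp, Category.assoc, hg,
    ← G.map_comp_assoc, adj.left_triangle_components, G.map_id, Category.id_comp]

lemma Monad.comparison_map_bijective_of_free (c : C) (X : D) :
    Function.Bijective ((comparison adj).map : (F.obj c ⟶ X) → _) := by
  refine ⟨fun f g hfg => ?_,
    fun φ => ⟨(adj.homEquiv c X).symm (adj.unit.app c ≫ φ.f), ?_⟩⟩
  · apply (adj.homEquiv c X).injective
    simp only [Adjunction.homEquiv_unit]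
    exact congrArg (adj.unit.app c ≫ ·.f) hfg
  · ext
    exact adj.map_homEquiv_symm_unit_comp φ.f φ.h

lemma Monad.comparison_map_counit_app (X : D) :
    (comparison adj).map (adj.counit.app X) =
      adj.toMonad.adj.counit.app ((comparison adj).obj X) := by
  ext
  rw [Monad.adj_counit]
  rfl

variable [IsIdempotentComplete D] [SplitEpiCategory adj.toMonad.Algebra]

lemma Monad.comparison_essSurj_of_splitEpiCategory : (comparison adj).EssSurj where
  mem_essImage M := by
    have := adj.toMonad.epi_adj_counit_app M
    have := isSplitEpi_of_epi (adj.toMonad.adj.counit.app M)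
    let hM := Retract.ofIsSplitEpi (adj.toMonad.adj.counit.app M)
    obtain ⟨Y, -, e, -⟩ := (comparison adj).exists_retract_of_retract_obj (p := F.obj M.A)
      (comparison_map_bijective_of_free adj _ _) hM
    exact ⟨Y, ⟨e⟩⟩

variable [G.ReflectsIsomorphisms]

lemma Adjunction.isSplitEpi_counit_app_of_splitEpiCategory (X : D) :
    IsSplitEpi (adj.counit.app X) := by
  have : IsSplitEpi ((Monad.comparison adj).map (adj.counit.app X)) := by
    rw [Monad.comparison_map_counit_app]
    have := adj.toMonad.epi_adj_counit_app ((Monad.comparison adj).obj X)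
    exact isSplitEpi_of_epi (adj.toMonad.adj.counit.app ((Monad.comparison adj).obj X))
  obtain ⟨Y, hY, e, he⟩ := (Monad.comparison adj).exists_retract_of_retract_obj
    (Monad.comparison_map_bijective_of_free adj _ _)
    (.ofIsSplitEpi ((Monad.comparison adj).map (adj.counit.app X)))
  rw [Retract.ofIsSplitEpi_r] at he
  have : IsIso ((Monad.comparison adj).map (hY.i ≫ adj.counit.app X)) := by
    rw [Functor.map_comp, ← he]
    infer_instance
  have : IsIso (G.map (hY.i ≫ adj.counit.app X)) :=
    inferInstanceAs (IsIso (adj.toMonad.forget.map ((Monad.comparison adj).map _)))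
  have := isIso_of_reflects_iso (hY.i ≫ adj.counit.app X) G
  exact IsSplitEpi.mk' ⟨inv (hY.i ≫ adj.counit.app X) ≫ hY.i, by simp⟩

theorem Monad.isEquivalence_comparison_of_splitEpiCategory :
    (comparison adj).IsEquivalence := by
  have hbij (X Y : D) : Function.Bijective ((comparison adj).map : (X ⟶ Y) → _) :=
    have := adj.isSplitEpi_counit_app_of_splitEpiCategory X
    (comparison adj).map_bijective_of_retract (.ofIsSplitEpi (adj.counit.app X))
      (comparison_map_bijective_of_free adj _ _)
  obtain ⟨hff⟩ := (Functor.FullyFaithful.nonempty_iff_map_bijective _).2 hbij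
  exact { full := hff.full, faithful := hff.faithful,
          essSurj := comparison_essSurj_of_splitEpiCategory adj }

end

end CategoryTheory

/-- **Essential monadicity.** Let `C` be an idempotent complete triangulated category and
`A = GF` a monad on `C` whose Eilenberg–Moore adjunction `F_A ⊣ U_A` is triangulated. If
`F : C ⇄ D : G` is a triangulated realization of `A` with `D` idempotent complete and `G`
conservative, then the Eilenberg–Moore comparison functor `E : D ⥤ Alg(A)` is an
equivalence, i.e. the adjunction `F ⊣ G` is monadic. -/
theorem essential_monadicity
    {C D : Type*} [Category C] [Category D]
    [HasZeroObject C] [HasZeroObject D] [Preadditive C] [Preadditive D]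
    [HasShift C ℤ] [HasShift D ℤ]
    [∀ n : ℤ, (CategoryTheory.shiftFunctor C n).Additive]
    [∀ n : ℤ, (CategoryTheory.shiftFunctor D n).Additive]
    [Pretriangulated C] [Pretriangulated D]
    [IsIdempotentComplete C] [IsIdempotentComplete D]
    (F : C ⥤ D) (G : D ⥤ C)
    [F.Additive] [F.CommShift ℤ] [F.IsTriangulated]
    [G.Additive] [G.CommShift ℤ] [G.IsTriangulated] [G.ReflectsIsomorphisms]
    (adj : F ⊣ G)
    -- the Eilenberg–Moore category of the monad `A = GF` is triangulated…
    [HasZeroObject adj.toMonad.Algebra] [Preadditive adj.toMonad.Algebra]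
    [HasShift adj.toMonad.Algebra ℤ]
    [∀ n : ℤ, (CategoryTheory.shiftFunctor adj.toMonad.Algebra n).Additive]
    [Pretriangulated adj.toMonad.Algebra]
    -- …in such a way that the free-forgetful adjunction `F_A ⊣ U_A` is triangulated
    [adj.toMonad.forget.Additive] [adj.toMonad.forget.CommShift ℤ]
    [adj.toMonad.forget.IsTriangulated]
    [adj.toMonad.free.Additive] [adj.toMonad.free.CommShift ℤ]
    [adj.toMonad.free.IsTriangulated] :
    (Monad.comparison adj).IsEquivalence :=
  Monad.isEquivalence_comparison_of_splitEpiCategory adj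
end

section
/- Let G : D → C be an exact functor between triangulated categories admitting a left adjoint, with C idempotent complete. Then G factors through the idempotent completion of the Verdier quotient D/Ker(G): there exists a functor G̃ : (D/Ker G)^♮ → C extending G, and G̃ is conservative. -/
/-!
Let `W` be the class of morphisms inverted by `G`. It admits a left calculus of fractions and is
compatible with the triangulation, so the lift `L : D/Ker G ⥤ C` of `G` is a triangulated functor;
its kernel is trivial, hence `L` is conservative. The extension of `L` to the idempotent completion
is then conservative as well: if `f : (P, p) ⟶ (N, q)` becomes invertible, complete
`(𝟙 - p, 𝟙 - q)` to an endomorphism `φ` of a distinguished triangle on `f`. Since `L p` and `L q`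
factor through `L f`, the endomorphism `L φ₃ - 𝟙` is square-zero; so `φ₃` is invertible, and this
forces `p` and `q` to factor through `f` on either side.
-/

open CategoryTheory Limits Pretriangulated Idempotents

namespace CategoryTheory

namespace Pretriangulated

variable {C : Type*} [Category C] [HasZeroObject C] [Preadditive C] [HasShift C ℤ]
  [∀ n : ℤ, (shiftFunctor C n).Additive] [Pretriangulated C]

lemma comp_self_eq_zero_of_mor₂_comp_of_comp_mor₃ {T : Triangle C} (hT : T ∈ distTriang C)
    {x : T.obj₃ ⟶ T.obj₃} (h₂ : T.mor₂ ≫ x = 0) (h₃ : x ≫ T.mor₃ = 0) : x ≫ x = 0 := by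
  obtain ⟨a, ha⟩ := Triangle.yoneda_exact₃ T hT x h₂
  obtain ⟨b, hb⟩ := Triangle.coyoneda_exact₃ T hT x h₃
  calc x ≫ x = b ≫ T.mor₂ ≫ T.mor₃ ≫ a := by rw [← Category.assoc, ← ha, ← hb]
    _ = 0 := by simp [reassoc_of% comp_distTriang_mor_zero₂₃ T hT]

lemma isIso_hom₃_of_hom₁_of_hom₂ {T : Triangle C} (hT : T ∈ distTriang C) (φ : T ⟶ T)
    (ψ : T.obj₂ ⟶ T.obj₁) (h₁ : φ.hom₁ = 𝟙 _ - T.mor₁ ≫ ψ) (h₂ : φ.hom₂ = 𝟙 _ - ψ ≫ T.mor₁) :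
    IsIso φ.hom₃ := by
  set x := φ.hom₃ - 𝟙 _
  have hx₂ : T.mor₂ ≫ x = 0 := by
    simp [x, Preadditive.comp_sub, φ.comm₂, h₂, Preadditive.sub_comp,
      comp_distTriang_mor_zero₁₂ T hT]
  have hx₃ : x ≫ T.mor₃ = 0 := by
    simp [x, Preadditive.sub_comp, ← φ.comm₃, h₁, Functor.map_sub, Preadditive.comp_sub,
      reassoc_of% (comp_distTriang_mor_zero₃₁ T hT)]
  have hxx := comp_self_eq_zero_of_mor₂_comp_of_comp_mor₃ hT hx₂ hx₃
  have hφ : φ.hom₃ = 𝟙 _ + x := by simp [x]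
  rw [hφ]
  exact ⟨⟨𝟙 _ - x, by simp [Preadditive.add_comp, Preadditive.comp_sub, hxx],
    by simp [Preadditive.sub_comp, Preadditive.comp_add, hxx]⟩⟩

lemma exists_eq_mor₂_comp_of_isIso_hom₁ {T : Triangle C} (hT : T ∈ distTriang C) (φ : T ⟶ T)
    [IsIso φ.hom₁] {p : T.obj₂ ⟶ T.obj₂} (hp : p ≫ p = p) (h₂ : φ.hom₂ = 𝟙 _ - p) :
    ∃ g : T.obj₃ ⟶ T.obj₂, p = T.mor₂ ≫ g := by
  refine Triangle.yoneda_exact₂ T hT p ?_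
  rw [← cancel_epi φ.hom₁, ← reassoc_of% φ.comm₁, h₂]
  simp [hp]

lemma exists_eq_comp_mor₁_of_isIso_hom₃ {T : Triangle C} (hT : T ∈ distTriang C) (φ : T ⟶ T)
    [IsIso φ.hom₃] {q : T.obj₂ ⟶ T.obj₂} (hq : q ≫ q = q) (h₂ : φ.hom₂ = 𝟙 _ - q) :
    ∃ g : T.obj₂ ⟶ T.obj₁, q = g ≫ T.mor₁ := by
  refine Triangle.coyoneda_exact₂ T hT q ?_
  rw [← cancel_mono φ.hom₃, Category.assoc, φ.comm₂, h₂]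
  simp [reassoc_of% hq]

end Pretriangulated

lemma Idempotents.Karoubi.isIso_of_p_eq_comp {E : Type*} [Category E] {P N : Karoubi E}
    (f : P ⟶ N) (g₁ g₂ : N.X ⟶ P.X) (h₁ : N.p = g₁ ≫ f.f) (h₂ : P.p = f.f ≫ g₂) : IsIso f := by
  refine ⟨⟨⟨N.p ≫ g₂ ≫ P.p, by simp [reassoc_of% N.idem, P.idem]⟩, ?_, ?_⟩⟩
  · ext
    simp [← reassoc_of% h₂]
  · ext
    dsimp
    calc (N.p ≫ g₂ ≫ P.p) ≫ f.f = g₁ ≫ (f.f ≫ g₂) ≫ f.f := by simp [h₁]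
      _ = N.p := by simp [← h₂, h₁]

noncomputable def Idempotents.toKaroubiCompFunctorExtensionObjIso {C E : Type*} [Category C]
    [Category E] [IsIdempotentComplete C] (L : E ⥤ C) :
    toKaroubi E ⋙ (functorExtension E C).obj L ≅ L :=
  (Functor.associator _ _ _).symm ≪≫
    Functor.isoWhiskerRight ((functorExtension₂CompWhiskeringLeftToKaroubiIso E C).app L) _ ≪≫
    Functor.associator _ _ _ ≪≫ Functor.isoWhiskerLeft L (toKaroubiEquivalence C).unitIso.symm ≪≫
    L.rightUnitor

open ZeroObject in
lemma MorphismProperty.isZero_of_isZero_obj_lift {C D D' : Type*} [Category C] [Category D]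
    [Category D'] [HasZeroMorphisms C] [HasZeroMorphisms D] [HasZeroObject D]
    [HasZeroMorphisms D'] (G : D ⥤ C) [G.PreservesZeroMorphisms]
    (Q : D ⥤ D') [Q.IsLocalization ((isomorphisms C).inverseImage G)] [Q.PreservesZeroMorphisms]
    (L : D' ⥤ C) (e : Q ⋙ L ≅ G) {Z : D'} (hZ : IsZero (L.obj Z)) : IsZero Z := by
  have := Localization.essSurj Q ((isomorphisms C).inverseImage G)
  let z := Q.objPreimage Z
  have hGz : IsZero (G.obj z) :=
    (hZ.of_iso (L.mapIso (Q.objObjPreimageIso Z))).of_iso (e.app z).symm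
  have : IsIso (Q.map ((isZero_zero D).to_ z)) :=
    Localization.inverts Q ((isomorphisms C).inverseImage G) _
      ((G.map_isZero (isZero_zero D)).isIso hGz _)
  exact ((Q.map_isZero (isZero_zero D)).of_iso (asIso (Q.map ((isZero_zero D).to_ z))).symm).of_iso
    (Q.objObjPreimageIso Z).symm

section Triangulated

open MorphismProperty

variable {C D : Type*} [Category C] [Category D]
  [HasZeroObject C] [Preadditive C] [HasShift C ℤ] [∀ n : ℤ, (shiftFunctor C n).Additive]
  [Pretriangulated C]
  [HasZeroObject D] [Preadditive D] [HasShift D ℤ] [∀ n : ℤ, (shiftFunctor D n).Additive]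
  [Pretriangulated D]

lemma Functor.reflectsIsomorphisms_of_isZero_obj (L : D ⥤ C) [L.CommShift ℤ] [L.IsTriangulated]
    (h : ∀ Z, IsZero (L.obj Z) → IsZero Z) : L.ReflectsIsomorphisms where
  reflects {X Y} u _ := by
    obtain ⟨Z, v, w, hT⟩ := distinguished_cocone_triangle u
    exact (Triangle.isZero₃_iff_isIso₁ _ hT).1 (h _ (Triangle.isZero₃_of_isIso₁ _
      (L.map_distinguished _ hT) (inferInstanceAs (IsIso (L.map u)))))

instance Idempotents.reflectsIsomorphisms_functorExtension₂_obj (L : D ⥤ C) [L.CommShift ℤ]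
    [L.IsTriangulated] [L.ReflectsIsomorphisms] :
    ((functorExtension₂ D C).obj L).ReflectsIsomorphisms where
  reflects {P N} f _ := by
    let ψ : L.obj N.X ⟶ L.obj P.X := (inv (((functorExtension₂ D C).obj L).map f)).f
    have hψ₁ : L.map f.f ≫ ψ = L.map P.p :=
      congrArg Karoubi.Hom.f (IsIso.hom_inv_id (((functorExtension₂ D C).obj L).map f))
    have hψ₂ : ψ ≫ L.map f.f = L.map N.p :=
      congrArg Karoubi.Hom.f (IsIso.inv_hom_id (((functorExtension₂ D C).obj L).map f))
    obtain ⟨Z, c, d, hT⟩ := distinguished_cocone_triangle f.f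
    have hcomm : f.f ≫ (𝟙 N.X - N.p) = (𝟙 P.X - P.p) ≫ f.f := by
      simp only [Preadditive.comp_sub, Preadditive.sub_comp, Karoubi.comp_p, Karoubi.p_comp,
        Category.comp_id, Category.id_comp]
    obtain ⟨s, hs₂, hs₃⟩ := complete_distinguished_triangle_morphism _ _ hT hT
      (𝟙 P.X - P.p : P.X ⟶ P.X) (𝟙 N.X - N.p : N.X ⟶ N.X) hcomm
    let φ := Triangle.homMk _ _ (𝟙 P.X - P.p : P.X ⟶ P.X) (𝟙 N.X - N.p : N.X ⟶ N.X) s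
      hcomm hs₂ hs₃
    have hLp : L.map (𝟙 P.X - P.p) = 𝟙 _ - L.map f.f ≫ ψ := by rw [L.map_sub, L.map_id, hψ₁]
    have hLq : L.map (𝟙 N.X - N.p) = 𝟙 _ - ψ ≫ L.map f.f := by rw [L.map_sub, L.map_id, hψ₂]
    have : IsIso (L.map φ.hom₃) :=
      isIso_hom₃_of_hom₁_of_hom₂ (L.map_distinguished _ hT) (L.mapTriangle.map φ) ψ hLp hLq
    have : IsIso φ.hom₃ := isIso_of_reflects_iso _ L
    obtain ⟨g₁, hg₁⟩ := exists_eq_comp_mor₁_of_isIso_hom₃ hT φ N.idem rfl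
    have : IsIso ((invRotate D).map φ).hom₁ := inferInstanceAs (IsIso (φ.hom₃⟦(-1 : ℤ)⟧'))
    obtain ⟨g₂, hg₂⟩ := exists_eq_mor₂_comp_of_isIso_hom₁ (T := (invRotate D).obj _)
      (inv_rot_of_distTriang _ hT) ((invRotate D).map φ) P.idem rfl
    exact Karoubi.isIso_of_p_eq_comp f g₁ g₂ hg₁ hg₂

variable (G : D ⥤ C) [G.CommShift ℤ] [G.IsTriangulated]

lemma Functor.exists_isIso_map_comp_eq_zero {Z Y : D} (g : Z ⟶ Y) (hZ : IsZero (G.obj Z)) :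
    ∃ (Y' : D) (t : Y ⟶ Y'), IsIso (G.map t) ∧ g ≫ t = 0 := by
  obtain ⟨Y', t, h, hT⟩ := distinguished_cocone_triangle g
  exact ⟨Y', t, (Triangle.isZero₁_iff_isIso₂ _ (G.map_distinguished _ hT)).1 hZ,
    comp_distTriang_mor_zero₁₂ _ hT⟩

instance : ((isomorphisms C).inverseImage G).HasLeftCalculusOfFractions where
  exists_leftFraction X Y φ := by
    obtain ⟨X₀, a, b, hT⟩ := distinguished_cocone_triangle₁ φ.s
    have hX₀ : IsZero (G.obj X₀) :=
      Triangle.isZero₁_of_isIso₂ _ (G.map_distinguished _ hT) φ.hs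
    obtain ⟨Y', t, ht, hat⟩ := G.exists_isIso_map_comp_eq_zero (a ≫ φ.f) hX₀
    have hat' : a ≫ φ.f ≫ t = 0 := by simpa using hat
    obtain ⟨c, hc⟩ := Triangle.yoneda_exact₂ _ hT (φ.f ≫ t) hat'
    exact ⟨⟨c, t, ht⟩, hc⟩
  ext X' X Y f₁ f₂ s hs h := by
    obtain ⟨Z, u, v, hT⟩ := distinguished_cocone_triangle s
    have hZ : IsZero (G.obj Z) := Triangle.isZero₃_of_isIso₁ _ (G.map_distinguished _ hT) hs
    have hs₀ : s ≫ (f₁ - f₂) = 0 := by rw [Preadditive.comp_sub, h, sub_self]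
    obtain ⟨g, hg⟩ : ∃ g : Z ⟶ Y, f₁ - f₂ = u ≫ g := Triangle.yoneda_exact₂ _ hT _ hs₀
    obtain ⟨Y', t, ht, hgt⟩ := G.exists_isIso_map_comp_eq_zero g hZ
    refine ⟨Y', t, ht, sub_eq_zero.1 ?_⟩
    rw [← Preadditive.sub_comp, hg, Category.assoc, hgt, comp_zero]

instance : ((isomorphisms C).inverseImage G).IsCompatibleWithShift ℤ where
  condition a := by
    ext X Y f
    exact (NatIso.isIso_map_iff (G.commShiftIso a) f).trans
      (isIso_iff_of_reflects_iso (G.map f) (shiftFunctor C a))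

instance : ((isomorphisms C).inverseImage G).IsCompatibleWithTriangulation where
  compatible_with_triangulation T₁ T₂ hT₁ hT₂ a b ha hb comm := by
    obtain ⟨c, hc₂, hc₃⟩ := complete_distinguished_triangle_morphism T₁ T₂ hT₁ hT₂ a b comm
    exact ⟨c, isIso₃_of_isIso₁₂ (G.mapTriangle.map (Triangle.homMk T₁ T₂ a b c comm hc₂ hc₃))
      (G.map_distinguished _ hT₁) (G.map_distinguished _ hT₂) ha hb, hc₂, hc₃⟩

end Triangulated

end CategoryTheory

/-- Let `G : D ⥤ C` be an exact functor between triangulated categories admitting a left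
adjoint, with `C` idempotent complete. Then `G` factors through the idempotent completion of
the Verdier quotient `D/Ker G` (the localization at the morphisms inverted by `G`): there
is a functor `G̃ : (D/Ker G)^♮ ⥤ C` extending `G`, and `G̃` is conservative. -/
theorem factor_through_karoubi_verdier_quotient
    {D C : Type*} [Category D] [Category C]
    [HasZeroObject D] [HasZeroObject C] [Preadditive D] [Preadditive C]
    [HasShift D ℤ] [HasShift C ℤ]
    [∀ n : ℤ, (CategoryTheory.shiftFunctor D n).Additive]
    [∀ n : ℤ, (CategoryTheory.shiftFunctor C n).Additive]
    [Pretriangulated D] [Pretriangulated C]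
    [IsIdempotentComplete C]
    (F : C ⥤ D) (G : D ⥤ C) (adj : F ⊣ G)
    [F.Additive] [F.CommShift ℤ] [F.IsTriangulated]
    [G.Additive] [G.CommShift ℤ] [G.IsTriangulated] :
    ∃ G' : Karoubi ((MorphismProperty.isomorphisms C).inverseImage G).Localization ⥤ C,
      Nonempty (((MorphismProperty.isomorphisms C).inverseImage G).Q ⋙
          toKaroubi _ ⋙ G' ≅ G) ∧
        G'.ReflectsIsomorphisms := by
  set W := (MorphismProperty.isomorphisms C).inverseImage G
  have hG : W.IsInvertedBy G := fun _ _ _ hf => hf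
  let L : W.Localization ⥤ C := Localization.lift G hG W.Q
  let e : W.Q ⋙ L ≅ G := Localization.Lifting.iso W.Q W G L
  let _ : L.CommShift ℤ := Functor.commShiftOfLocalization W.Q W ℤ G L
  have : NatTrans.CommShift e.hom ℤ := NatTrans.commShift_iso_hom_of_localization W.Q W ℤ G L
  have : W.Q.mapArrow.EssSurj := Localization.essSurj_mapArrow W.Q W
  have : W.Q.IsTriangulated := Triangulated.Localization.isTriangulated_functor W.Q W
  have : L.IsTriangulated := Functor.isTriangulated_of_precomp_iso e
  have : L.ReflectsIsomorphisms := L.reflectsIsomorphisms_of_isZero_obj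
    fun _ => MorphismProperty.isZero_of_isZero_obj_lift G W.Q L e
  exact ⟨(functorExtension _ C).obj L,
    ⟨Functor.isoWhiskerLeft W.Q (toKaroubiCompFunctorExtensionObjIso L) ≪≫ e⟩,
    inferInstanceAs
      ((functorExtension₂ _ C).obj L ⋙ (toKaroubiEquivalence C).inverse).ReflectsIsomorphisms⟩
end

section
/- If an idempotent monad (Bousfield localization) A acts on a triangulated category C, then its Eilenberg–Moore category of algebras is equivalent to the essential image of A, which is a triangulated category when A is exact; in particular Alg(A) inherits a triangulation. -/
/-!
Idempotence gives `T η = η T` and `η_{T y} = μ_y⁻¹`, so `η` is invertible exactly on the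
essential image of `T`, an algebra structure on `x` can only be `η_x⁻¹`, and every morphism
between algebras is an algebra morphism. For triangulated `T` the essential image contains `0`
and is stable under shifts; it is closed under extensions by the five lemma, applied to a
morphism from a distinguished triangle to its image under `T` whose outer components come
from `η`.
-/

open CategoryTheory Limits Pretriangulated

namespace CategoryTheory.Monad

variable {C : Type*} [Category C] (T : Monad C) [IsIso T.μ]

lemma map_η_app_eq_η_app_obj (x : C) : T.map (T.η.app x) = T.η.app (T.obj x) := by
  rw [← cancel_mono (T.μ.app x), right_unit, left_unit]
  rfl

instance isIso_η_app_obj (y : C) : IsIso (T.η.app (T.obj y)) := by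
  rw [show T.η.app (T.obj y) = inv (T.μ.app y) by
    rw [← cancel_mono (T.μ.app y), left_unit, IsIso.inv_hom_id]]
  infer_instance

lemma isIso_η_app_iff_essImage (x : C) : IsIso (T.η.app x) ↔ T.toFunctor.essImage x := by
  refine ⟨fun _ => ⟨x, ⟨(asIso (T.η.app x)).symm⟩⟩, fun ⟨y, ⟨e⟩⟩ => ?_⟩
  have h : T.η.app x = e.inv ≫ T.η.app (T.obj y) ≫ T.map e.hom := by
    rw [← T.η.naturality, Functor.id_map, Iso.inv_hom_id_assoc]
  rw [h]
  infer_instance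

instance isIso_η_app_algebra (A : T.Algebra) : IsIso (T.η.app A.A) :=
  ⟨A.a, A.unit, by
    rw [← Functor.id_map A.a, T.η.naturality, ← map_η_app_eq_η_app_obj, ← T.map_comp, A.unit]
    simp⟩

lemma Algebra.map_comp_a_eq_a_comp {A B : T.Algebra} (f : A.A ⟶ B.A) :
    T.map f ≫ B.a = A.a ≫ f := by
  rw [← cancel_epi (T.η.app A.A), ← T.η.naturality_assoc, B.unit, A.unit_assoc]
  exact Category.comp_id f

noncomputable def algebraOfIsIsoη (x : C) [IsIso (T.η.app x)] : T.Algebra where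
  A := x
  a := inv (T.η.app x)
  assoc := by
    rw [← cancel_epi (T.map (T.η.app x)), ← T.map_comp_assoc, IsIso.hom_inv_id, T.map_id,
      map_η_app_eq_η_app_obj, left_unit_assoc, Category.id_comp]

def forgetToIsIsoη : T.Algebra ⥤ ObjectProperty.FullSubcategory (fun x => IsIso (T.η.app x)) :=
  ObjectProperty.lift _ T.forget (fun A => isIso_η_app_algebra T A)

def fullyFaithfulForgetToIsIsoη : (forgetToIsIsoη T).FullyFaithful where
  preimage g := { f := g.hom, h := Algebra.map_comp_a_eq_a_comp T g.hom }

instance : (forgetToIsIsoη T).EssSurj where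
  mem_essImage x := by
    have := x.2
    exact ⟨algebraOfIsIsoη T x.1, ⟨Iso.refl _⟩⟩

instance : (forgetToIsIsoη T).IsEquivalence where
  faithful := (fullyFaithfulForgetToIsIsoη T).faithful
  full := (fullyFaithfulForgetToIsIsoη T).full

end CategoryTheory.Monad

namespace CategoryTheory

variable {C : Type*} [Category C] [HasZeroObject C] [Preadditive C] [HasShift C ℤ]
  [∀ n : ℤ, (shiftFunctor C n).Additive] [Pretriangulated C]

lemma Pretriangulated.nonempty_iso_obj₂_of_isIso_app {F : C ⥤ C} [F.CommShift ℤ]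
    [F.IsTriangulated] (η : 𝟭 C ⟶ F) (Tr : Triangle C) (hTr : Tr ∈ distTriang C)
    (h₁ : IsIso (η.app (Tr.obj₁⟦(1 : ℤ)⟧))) (h₃ : IsIso (η.app Tr.obj₃)) :
    Nonempty (Tr.obj₂ ≅ F.obj Tr.obj₂) := by
  -- `η` need not be compatible with `F.commShiftIso`, so the first component is obtained by
  -- desuspending `η` at `Tr.obj₁⟦1⟧` rather than taken to be `η.app Tr.obj₁`.
  let a : Tr.obj₁ ⟶ F.obj Tr.obj₁ :=
    (shiftFunctor C (1 : ℤ)).preimage (η.app _ ≫ (F.commShiftIso (1 : ℤ)).hom.app Tr.obj₁)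
  have ha : IsIso ((shiftFunctor C (1 : ℤ)).map a) := by
    rw [Functor.map_preimage]
    infer_instance
  have comm : Tr.mor₃ ≫ a⟦(1 : ℤ)⟧' = η.app Tr.obj₃ ≫ (F.mapTriangle.obj Tr).mor₃ := by
    rw [Functor.map_preimage, ← Category.assoc, ← Functor.id_map Tr.mor₃, η.naturality,
      Category.assoc]
    rfl
  obtain ⟨b, hb₁, hb₂⟩ := complete_distinguished_triangle_morphism₂ _ _ hTr
    (F.map_distinguished Tr hTr) a (η.app Tr.obj₃) comm
  have : IsIso a := isIso_of_fully_faithful (shiftFunctor C (1 : ℤ)) a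
  have : IsIso b := isIso₂_of_isIso₁₃ (Triangle.homMk _ _ a b (η.app Tr.obj₃) hb₁ hb₂ comm)
    hTr (F.map_distinguished Tr hTr) ‹_› h₃
  exact ⟨(asIso b : Tr.obj₂ ≅ (F.mapTriangle.obj Tr).obj₂)⟩

variable (F : C ⥤ C) [F.CommShift ℤ]

instance Functor.essImage_isStableUnderShift : F.essImage.IsStableUnderShift ℤ where
  isStableUnderShiftBy n := ⟨fun _ ⟨y, ⟨e⟩⟩ =>
    ⟨y⟦n⟧, ⟨(F.commShiftIso n).app y ≪≫ (shiftFunctor C n).mapIso e⟩⟩⟩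

open ZeroObject in
instance Functor.essImage_containsZero [F.IsTriangulated] : F.essImage.ContainsZero :=
  ⟨⟨F.obj 0, F.map_isZero (isZero_zero C), F.obj_mem_essImage 0⟩⟩

instance Monad.essImage_isTriangulated (T : Monad C) [IsIso T.μ] [T.toFunctor.CommShift ℤ]
    [T.toFunctor.IsTriangulated] : T.toFunctor.essImage.IsTriangulated where
  ext₂' Tr hTr h₁ h₃ := by
    obtain ⟨e⟩ := nonempty_iso_obj₂_of_isIso_app T.η Tr hTr
      ((T.isIso_η_app_iff_essImage _).2 (T.essImage.le_shift 1 _ h₁))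
      ((T.isIso_η_app_iff_essImage _).2 h₃)
    exact T.essImage.le_isoClosure _ ⟨_, ⟨e.symm⟩⟩

end CategoryTheory

/-- If an idempotent monad (Bousfield localization) `A` acts on a triangulated category `C`
and its underlying endofunctor is exact, then its Eilenberg–Moore category of algebras is
equivalent to the essential image of `A` (the full subcategory of objects whose unit map is
invertible), and this subcategory is triangulated; in particular `Alg(A)` inherits a
triangulation. -/
theorem idempotent_monad_algebra_equiv_localObjects
    {C : Type*} [Category C]
    [HasZeroObject C] [Preadditive C] [HasShift C ℤ]
    [∀ n : ℤ, (CategoryTheory.shiftFunctor C n).Additive] [Pretriangulated C]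
    (T : Monad C) (hidem : IsIso T.μ)
    [T.toFunctor.Additive] [T.toFunctor.CommShift ℤ] [T.toFunctor.IsTriangulated] :
    Nonempty (T.Algebra ≌ ObjectProperty.FullSubcategory (fun x => IsIso (T.η.app x))) ∧
      ∃ S : ObjectProperty C, S.IsTriangulated ∧
        ∀ x : C, S x ↔ IsIso (T.η.app x) :=
  ⟨⟨(Monad.forgetToIsIsoη T).asEquivalence⟩, T.toFunctor.essImage, inferInstance,
    fun x => (T.isIso_η_app_iff_essImage x).symm⟩
end
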